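/- arXiv:2602.02250 — 4 statements merged into one kernel-verified Lean document; each statement's English description precedes it below -/
import Mathlib

section
/- Suppose a curve of probability measures μ_t on ℝ^d satisfies μ_t = (X_t)_# μ_0, where X_t solves Ẋ_t = v_t ∘ X_t, X_0 = id, and v_t(x) = S_t x + s_t is affine in x. If μ_0 is elliptic E(m_0, Σ_0, g), then μ_t is elliptic E(m_t, Σ_t, g) for every t ≥ 0. -/
/-!
The flow of `ẋ = S t x + s t` is affine: differences of solutions solve the linear equation
`u̇ = S t u`, whose only solution through `0` is `0` (Grönwall), so `x ↦ X t x - X t 0` is additive,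
homogeneous and injective. The pushforward of `E(m, Σ, g)` by an invertible affine map `A x + a` is
`E(A m + a, A Σ Aᵀ, g)` by the linear change of variables, the Jacobian `|det A|` being absorbed
by `√det (A Σ Aᵀ) = |det A| √det Σ`. -/

open MeasureTheory Real Matrix

/-- The density of the elliptic distribution `E(m, Σ, g)` on `ℝ^d`. -/
noncomputable def ellipticDensity {d : ℕ} (m : Fin d → ℝ)
    (Sig : Matrix (Fin d) (Fin d) ℝ) (g : ℝ → ℝ) : (Fin d → ℝ) → ℝ :=
  fun x => (Real.sqrt Sig.det)⁻¹ * g ((x - m) ⬝ᵥ (Sig⁻¹).mulVec (x - m))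

section AffineODE

open Set

variable {E : Type*} [NormedAddCommGroup E] [NormedSpace ℝ E] {S : ℝ → E →L[ℝ] E}

theorem ODE_linear_solution_eq_zero (hS : Continuous S) {u : ℝ → E}
    (hu : ∀ t, HasDerivAt u (S t (u t)) t) {t₀ : ℝ} (h₀ : u t₀ = 0) (t : ℝ) : u t = 0 := by
  obtain ⟨a, b, ht, ht₀⟩ : ∃ a b, t ∈ Ioo a b ∧ t₀ ∈ Ioo a b :=
    ⟨min t t₀ - 1, max t t₀ + 1, by grind⟩
  obtain ⟨K, hK⟩ := (isCompact_Icc (a := a) (b := b)).exists_bound_of_continuousOn hS.continuousOn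
  have hlip : ∀ τ ∈ Ioo a b, LipschitzOnWith K.toNNReal (S τ) univ := by
    intro τ hτ
    refine ((S τ).lipschitz.weaken ?_).lipschitzOnWith
    rw [← NNReal.coe_le_coe, coe_nnnorm, Real.coe_toNNReal']
    exact (hK τ (Ioo_subset_Icc_self hτ)).trans (le_max_left K 0)
  have hzero : ∀ τ, HasDerivAt (fun _ => (0 : E)) (S τ 0) τ := fun τ => by
    simpa using hasDerivAt_const τ (0 : E)
  exact ODE_solution_unique_of_mem_Ioo hlip ht₀ (fun τ _ => ⟨hu τ, trivial⟩)
    (fun τ _ => ⟨hzero τ, trivial⟩) h₀ ht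

variable {s : ℝ → E} {X : ℝ → E → E}

theorem hasDerivAt_affine_flow_sub
    (hX : ∀ x t, HasDerivAt (fun τ => X τ x) (S t (X t x) + s t) t) (x y : E) (t : ℝ) :
    HasDerivAt (fun τ => X τ x - X τ y) (S t (X t x - X t y)) t := by
  simpa using (hX x t).fun_sub (hX y t)

theorem affine_flow_injective (hS : Continuous S)
    (hX : ∀ x t, HasDerivAt (fun τ => X τ x) (S t (X t x) + s t) t) (hX0 : ∀ x, X 0 x = x)
    (t : ℝ) : Function.Injective (X t) := fun x y hxy => by
  simpa [hX0, sub_eq_zero] using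
    ODE_linear_solution_eq_zero hS (hasDerivAt_affine_flow_sub hX x y) (sub_eq_zero.2 hxy) 0

theorem exists_linearMap_affine_flow_eq (hS : Continuous S)
    (hX : ∀ x t, HasDerivAt (fun τ => X τ x) (S t (X t x) + s t) t) (hX0 : ∀ x, X 0 x = x)
    (t : ℝ) : ∃ L : E →ₗ[ℝ] E, ∀ x, X t x = L x + X t 0 := by
  have hD := fun x => hasDerivAt_affine_flow_sub hX x 0
  refine ⟨{ toFun := fun x => X t x - X t 0, map_add' := ?_, map_smul' := ?_ },
    fun x => (sub_add_cancel _ _).symm⟩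
  · intro x y
    refine sub_eq_zero.1 (ODE_linear_solution_eq_zero hS
      (u := fun τ => (X τ (x + y) - X τ 0) - ((X τ x - X τ 0) + (X τ y - X τ 0)))
      (fun τ => ?_) (t₀ := 0) (by simp [hX0]) t)
    simpa using (hD (x + y) τ).fun_sub ((hD x τ).fun_add (hD y τ))
  · intro c x
    refine sub_eq_zero.1 (ODE_linear_solution_eq_zero hS
      (u := fun τ => (X τ (c • x) - X τ 0) - c • (X τ x - X τ 0))
      (fun τ => ?_) (t₀ := 0) (by simp [hX0]) t)
    simpa using (hD (c • x) τ).fun_sub ((hD x τ).fun_const_smul c)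

theorem Matrix.exists_isUnit_affine_flow_eq {n : Type*} [Fintype n] [DecidableEq n]
    {S : ℝ → Matrix n n ℝ} (hS : Continuous S) {s : ℝ → n → ℝ} {X : ℝ → (n → ℝ) → n → ℝ}
    (hX : ∀ x t, HasDerivAt (fun τ => X τ x) (S t *ᵥ X t x + s t) t) (hX0 : ∀ x, X 0 x = x)
    (t : ℝ) : ∃ (A : Matrix n n ℝ) (a : n → ℝ), IsUnit A ∧ ∀ x, X t x = A *ᵥ x + a := by
  let S' : ℝ → (n → ℝ) →L[ℝ] n → ℝ := fun t => LinearMap.toContinuousLinearMap (toLin' (S t))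
  let Φ : Matrix n n ℝ →ₗ[ℝ] (n → ℝ) →L[ℝ] n → ℝ :=
    LinearMap.toContinuousLinearMap.toLinearMap ∘ₗ toLin'.toLinearMap
  have hS' : Continuous S' := Φ.continuous_of_finiteDimensional.comp hS
  have hX' : ∀ x t, HasDerivAt (fun τ => X τ x) (S' t (X t x) + s t) t := hX
  obtain ⟨L, hL⟩ := exists_linearMap_affine_flow_eq hS' hX' hX0 t
  refine ⟨LinearMap.toMatrix' L, X t 0, ?_, fun x => by rw [LinearMap.toMatrix'_mulVec, hL]⟩
  rw [← mulVec_injective_iff_isUnit]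
  intro x y hxy
  apply affine_flow_injective hS' hX' hX0 t
  simp only [LinearMap.toMatrix'_mulVec] at hxy
  rw [hL x, hL y, hxy]

end AffineODE

theorem MeasurableEquiv.map_withDensity {α β : Type*} [MeasurableSpace α] [MeasurableSpace β]
    (T : α ≃ᵐ β) (μ : Measure α) (f : α → ENNReal) :
    Measure.map T (μ.withDensity f) = (Measure.map T μ).withDensity (f ∘ T.symm) := by
  ext s hs
  rw [Measure.map_apply T.measurable hs, withDensity_apply _ (T.measurable hs),
    withDensity_apply _ hs, Measure.restrict_map T.measurable hs, lintegral_map_equiv]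
  simp

namespace Matrix

variable {n : Type*} [Fintype n] [DecidableEq n]

noncomputable def affineMeasurableEquiv (A : Matrix n n ℝ) (hA : IsUnit A) (a : n → ℝ) :
    (n → ℝ) ≃ᵐ (n → ℝ) where
  toFun x := A *ᵥ x + a
  invFun y := A⁻¹ *ᵥ (y - a)
  left_inv x := by simp [nonsing_inv_mul A ((isUnit_iff_isUnit_det A).1 hA)]
  right_inv y := by simp [mul_nonsing_inv A ((isUnit_iff_isUnit_det A).1 hA)]
  measurable_toFun :=
    ((continuous_const.matrix_mulVec continuous_id).add continuous_const).measurable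
  measurable_invFun :=
    (continuous_const.matrix_mulVec (continuous_id.sub continuous_const)).measurable

theorem map_affineMeasurableEquiv_volume (A : Matrix n n ℝ) (hA : IsUnit A) (a : n → ℝ) :
    Measure.map (A.affineMeasurableEquiv hA a) volume = ENNReal.ofReal |A.det|⁻¹ • volume := by
  have hdet : A.det ≠ 0 := ((isUnit_iff_isUnit_det A).1 hA).ne_zero
  have hcomp : ⇑(A.affineMeasurableEquiv hA a) = (· + a) ∘ toLin' A := rfl
  rw [hcomp, ← Measure.map_map (measurable_add_const a)
      (toLin' A).continuous_of_finiteDimensional.measurable,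
    map_matrix_volume_pi_eq_smul_volume_pi hdet, Measure.map_smul, map_add_right_eq_self, abs_inv]

end Matrix

theorem ellipticDensity_affine {d : ℕ} (A : Matrix (Fin d) (Fin d) ℝ) (hA : IsUnit A)
    (a m : Fin d → ℝ) (Sig : Matrix (Fin d) (Fin d) ℝ) (g : ℝ → ℝ) (y : Fin d → ℝ) :
    |A.det|⁻¹ * ellipticDensity m Sig g (A⁻¹ *ᵥ (y - a)) =
      ellipticDensity (A *ᵥ m + a) (A * Sig * Aᵀ) g y := by
  have hA' : A⁻¹ * A = 1 := nonsing_inv_mul A ((isUnit_iff_isUnit_det A).1 hA)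
  have hsqrt : √(A * Sig * Aᵀ).det = |A.det| * √Sig.det := by
    rw [det_mul, det_mul, det_transpose, mul_right_comm, ← sq, sqrt_mul (sq_nonneg _),
      sqrt_sq_eq_abs]
  have hcentre : A⁻¹ *ᵥ (y - a) - m = A⁻¹ *ᵥ (y - (A *ᵥ m + a)) := by
    rw [sub_add_eq_sub_sub_swap, mulVec_sub A⁻¹ (y - a), mulVec_mulVec, hA', one_mulVec]
  have hquad (w : Fin d → ℝ) :
      A⁻¹ *ᵥ w ⬝ᵥ Sig⁻¹ *ᵥ A⁻¹ *ᵥ w = w ⬝ᵥ (A * Sig * Aᵀ)⁻¹ *ᵥ w := by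
    rw [Matrix.mul_inv_rev, Matrix.mul_inv_rev, ← mulVec_mulVec, dotProduct_mulVec w,
      ← transpose_nonsing_inv, vecMul_transpose, mulVec_mulVec, ← mulVec_mulVec]
  rw [ellipticDensity, ellipticDensity, hsqrt, hcentre, hquad, mul_inv, mul_assoc |A.det|⁻¹]

theorem map_affineMeasurableEquiv_withDensity_ellipticDensity {d : ℕ}
    (A : Matrix (Fin d) (Fin d) ℝ) (hA : IsUnit A) (a m : Fin d → ℝ)
    (Sig : Matrix (Fin d) (Fin d) ℝ) (g : ℝ → ℝ) :
    Measure.map (A.affineMeasurableEquiv hA a)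
        (volume.withDensity fun x => ENNReal.ofReal (ellipticDensity m Sig g x)) =
      volume.withDensity fun y =>
        ENNReal.ofReal (ellipticDensity (A *ᵥ m + a) (A * Sig * Aᵀ) g y) := by
  rw [MeasurableEquiv.map_withDensity, map_affineMeasurableEquiv_volume, withDensity_smul_measure,
    ← withDensity_smul' _ _ ENNReal.ofReal_ne_top]
  congr with y
  rw [← ellipticDensity_affine A hA a, ENNReal.ofReal_mul (inv_nonneg.2 (abs_nonneg _))]
  rfl

theorem pushforward_affine_flow_elliptic_general
    (d : ℕ)
    (S : ℝ → Matrix (Fin d) (Fin d) ℝ) (s : ℝ → Fin d → ℝ)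
    (hS_cont : ∀ i j, Continuous (fun t => S t i j))
    (X : ℝ → (Fin d → ℝ) → (Fin d → ℝ))
    (hX0 : ∀ x, X 0 x = x)
    (hX_ode : ∀ x t, ∀ i,
      HasDerivAt (fun τ => X τ x i) (((S t).mulVec (X t x) + s t) i) t)
    (g : ℝ → ℝ)
    (m₀ : Fin d → ℝ) (Sig₀ : Matrix (Fin d) (Fin d) ℝ) (hSig₀ : Sig₀.PosDef)
    (μ₀ : Measure (Fin d → ℝ))
    (hμ₀ : μ₀ = volume.withDensity
      (fun x => ENNReal.ofReal (ellipticDensity m₀ Sig₀ g x))) :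
    ∀ t : ℝ, 0 ≤ t → ∃ (mt : Fin d → ℝ) (Sigt : Matrix (Fin d) (Fin d) ℝ),
      Sigt.PosDef ∧ Measure.map (X t) μ₀ = volume.withDensity
        (fun x => ENNReal.ofReal (ellipticDensity mt Sigt g x)) := by
  intro t _
  obtain ⟨A, a, hA, hXt⟩ := exists_isUnit_affine_flow_eq (continuous_matrix hS_cont)
    (fun x τ => hasDerivAt_pi.2 (hX_ode x τ)) hX0 t
  refine ⟨A *ᵥ m₀ + a, A * Sig₀ * Aᵀ, ?_, ?_⟩
  · simpa using hSig₀.mul_mul_conjTranspose_same (vecMul_injective_of_isUnit hA)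
  · rw [hμ₀, show X t = A.affineMeasurableEquiv hA a from funext hXt,
      map_affineMeasurableEquiv_withDensity_ellipticDensity]

/-- if `μ_t = (X_t)_# μ_0` where `X_t` is the flow of the affine vector
field `v_t(x) = S_t x + s_t`, and `μ_0` is elliptic `E(m_0, Σ_0, g)`, then each `μ_t`,
`t ≥ 0`, is elliptic `E(m_t, Σ_t, g)` for some `m_t`, `Σ_t`. -/
theorem pushforward_affine_flow_elliptic
    (d : ℕ) (hd : 0 < d)
    (S : ℝ → Matrix (Fin d) (Fin d) ℝ) (s : ℝ → Fin d → ℝ)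
    (hS_cont : ∀ i j, Continuous (fun t => S t i j))
    (hs_cont : ∀ i, Continuous (fun t => s t i))
    (X : ℝ → (Fin d → ℝ) → (Fin d → ℝ))
    (hX0 : ∀ x, X 0 x = x)
    (hX_meas : ∀ t, Measurable (X t))
    (hX_ode : ∀ x t, ∀ i,
      HasDerivAt (fun τ => X τ x i) (((S t).mulVec (X t x) + s t) i) t)
    (g : ℝ → ℝ) (hg_pos : ∀ r, 0 ≤ r → 0 < g r)
    (m₀ : Fin d → ℝ) (Sig₀ : Matrix (Fin d) (Fin d) ℝ) (hSig₀ : Sig₀.PosDef)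
    (μ₀ : Measure (Fin d → ℝ))
    (hμ₀ : μ₀ = volume.withDensity
      (fun x => ENNReal.ofReal (ellipticDensity m₀ Sig₀ g x))) :
    ∀ t : ℝ, 0 ≤ t → ∃ (mt : Fin d → ℝ) (Sigt : Matrix (Fin d) (Fin d) ℝ),
      Sigt.PosDef ∧ Measure.map (X t) μ₀ = volume.withDensity
        (fun x => ENNReal.ofReal (ellipticDensity mt Sigt g x)) :=
  pushforward_affine_flow_elliptic_general d S s hS_cont X hX0 hX_ode g m₀ Sig₀ hSig₀ μ₀ hμ₀
end

section
/- Consider the matrix ODE system ṁ_t = B m_t + b, Σ̇_t = B Σ_t + Σ_t Bᵀ with B symmetric, constant in time. Its solution is m_1 = e^B m_0 + (e^B B† + B^⊥ − B†) b and Σ_1 = e^B Σ_0 e^B, where B† is the Moore–Penrose pseudoinverse of B and B^⊥ = I − B B† is the projector onto the kernel of B. -/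
/-!
Both equations are solved with integrating factors. Since `B` commutes with `exp (-t B)`, the
derivative of `exp (-t B) * Σ t * exp (-t Bᵀ)` vanishes, and the derivative of
`exp (-t B) *ᵥ m t` is `exp (-t B) *ᵥ b`. A primitive of `t ↦ exp (-t B)` is
`t • (1 - B B†) - B† exp (-t B)`: on the range of `B` the pseudoinverse inverts `B`, and on its
kernel `exp (-t B)` is the identity. That this is a primitive rests on `B B† = B† B`, which the
Penrose conditions force for symmetric `B`.
-/

open Matrix NormedSpace

-- The ring operations these instances provide agree with `Matrix`'s only up to unfolding, so
-- Banach-algebra lemmas are applied to matrices with `exact` rather than `rw`.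
attribute [local instance] Matrix.linftyOpNormedRing Matrix.linftyOpNormedAlgebra

theorem eq_of_forall_hasDerivAt_zero {𝕜 E : Type*} [RCLike 𝕜] [NormedAddCommGroup E]
    [NormedSpace 𝕜 E] {f : 𝕜 → E} (hf : ∀ t, HasDerivAt f 0 t) (x y : 𝕜) : f x = f y :=
  is_const_of_deriv_eq_zero (fun t => (hf t).differentiableAt) (fun t => (hf t).deriv) x y

theorem HasDerivAt.matrix_mulVec {𝕜 m n : Type*} [NontriviallyNormedField 𝕜] [Fintype n]
    {E : 𝕜 → Matrix m n 𝕜} {E' : Matrix m n 𝕜} {x : 𝕜 → n → 𝕜} {x' : n → 𝕜} {t : 𝕜}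
    (hE : HasDerivAt E E' t) (hx : HasDerivAt x x' t) :
    HasDerivAt (fun τ => E τ *ᵥ x τ) (E' *ᵥ x t + E t *ᵥ x') t := by
  refine hasDerivAt_pi.2 fun i => ?_
  simp only [Pi.add_apply, mulVec, dotProduct, ← Finset.sum_add_distrib]
  exact HasDerivAt.fun_sum fun j _ =>
    (hasDerivAt_pi.1 (hasDerivAt_pi.1 hE i) j).fun_mul (hasDerivAt_pi.1 hx j)

theorem Matrix.IsSymm.commute_of_pseudoinverse {R n : Type*} [CommSemiring R] [Fintype n]
    {B Bp : Matrix n n R} (hB : B.IsSymm) (h : B * Bp * B = B) (h₁ : (B * Bp).IsSymm)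
    (h₂ : (Bp * B).IsSymm) : Commute B Bp := by
  have e₁ : B * Bp = Bpᵀ * B := by rw [← h₁.eq, transpose_mul, hB.eq]
  have e₂ : Bp * B = B * Bpᵀ := by rw [← h₂.eq, transpose_mul, hB.eq]
  calc B * Bp = Bpᵀ * (B * Bp * B) := by rw [h, e₁]
    _ = (B * Bp) * (Bp * B) := by rw [mul_assoc B, ← mul_assoc, ← e₁]
    _ = (B * Bp * B) * Bpᵀ := by rw [mul_assoc (B * Bp), ← e₂]
    _ = Bp * B := by rw [h, e₂]

section RatAlgebra

variable {𝔸 : Type*} [NormedRing 𝔸] [NormedAlgebra ℚ 𝔸] [CompleteSpace 𝔸]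

theorem exp_mul_exp_neg (x : 𝔸) : exp x * exp (-x) = 1 := by
  rw [← exp_add_of_commute (Commute.refl x).neg_right, add_neg_cancel, exp_zero]

theorem exp_neg_mul_exp (x : 𝔸) : exp (-x) * exp x = 1 := by
  simpa using exp_mul_exp_neg (-x)

theorem mul_exp_eq_self_of_mul_eq_zero {p x : 𝔸} (h : p * x = 0) : p * exp x = p := by
  have := (show SemiconjBy p x 0 by simp [SemiconjBy, h]).exp_right
  rwa [exp_zero, SemiconjBy, one_mul] at this

theorem exp_mul_eq_self_of_mul_eq_zero {p x : 𝔸} (h : x * p = 0) : exp x * p = p := by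
  have := (show SemiconjBy p 0 x by simp [SemiconjBy, h]).exp_right
  rwa [exp_zero, SemiconjBy, mul_one, eq_comm] at this

end RatAlgebra

section RealAlgebra

variable {𝔸 : Type*} [NormedRing 𝔸] [NormedAlgebra ℝ 𝔸] [CompleteSpace 𝔸]

theorem eq_exp_smul_mul_mul_exp_smul_of_hasDerivAt {a c : 𝔸} {S : ℝ → 𝔸}
    (hS : ∀ t, HasDerivAt S (a * S t + S t * c) t) (s : ℝ) :
    S s = exp (s • a) * S 0 * exp (s • c) := by
  let : NormedAlgebra ℚ 𝔸 := .restrictScalars ℚ ℝ 𝔸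
  have hconj : ∀ t, HasDerivAt (fun τ => exp (τ • -a) * S τ * exp (τ • -c)) 0 t := by
    intro t
    have ha : Commute (exp (t • -a)) a := ((Commute.refl a).neg_left.smul_left t).exp_left
    have hc : Commute (exp (t • -c)) c := ((Commute.refl c).neg_left.smul_left t).exp_left
    refine (((hasDerivAt_exp_smul_const' (-a) t).fun_mul (hS t)).fun_mul
      (hasDerivAt_exp_smul_const (-c) t)).congr_deriv ?_
    rw [mul_add, ← mul_assoc _ a, ha.eq, mul_neg, hc.eq]
    noncomm_ring
  have h := eq_of_forall_hasDerivAt_zero hconj s 0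
  simp only [zero_smul, neg_zero, exp_zero, one_mul, mul_one, smul_neg] at h
  calc S s = exp (s • a) * exp (-(s • a)) * S s * (exp (-(s • c)) * exp (s • c)) := by
        rw [exp_mul_exp_neg, exp_neg_mul_exp, one_mul, mul_one]
    _ = exp (s • a) * (exp (-(s • a)) * S s * exp (-(s • c))) * exp (s • c) := by
        simp only [mul_assoc]
    _ = exp (s • a) * S 0 * exp (s • c) := by rw [h]

theorem eq_exp_smul_mulVec_of_hasDerivAt {n : Type*} [Fintype n] [DecidableEq n]
    {A : Matrix n n ℝ} {c : n → ℝ} {x : ℝ → n → ℝ} {G : ℝ → Matrix n n ℝ}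
    (hx : ∀ t, HasDerivAt x (A *ᵥ x t + c) t) (hG : ∀ t, HasDerivAt G (exp (t • -A)) t)
    (s : ℝ) : x s = exp (s • A) *ᵥ (x 0 + (G s - G 0) *ᵥ c) := by
  let : NormedAlgebra ℚ (Matrix n n ℝ) := .restrictScalars ℚ ℝ _
  have hconst : ∀ t, HasDerivAt (fun τ => exp (τ • -A) *ᵥ x τ - G τ *ᵥ c) 0 t := by
    intro t
    refine (((hasDerivAt_exp_smul_const (-A) t).matrix_mulVec (hx t)).sub
      ((hG t).matrix_mulVec (hasDerivAt_const t c))).congr_deriv ?_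
    rw [mulVec_add, mulVec_mulVec, mul_neg, neg_mulVec, mulVec_zero, add_zero,
      neg_add_cancel_left]
    exact sub_self _
  have h := eq_of_forall_hasDerivAt_zero hconst s 0
  simp only [zero_smul, exp_zero, one_mulVec, sub_eq_iff_eq_add] at h
  have hinv : exp (s • A) * exp (s • -A) = 1 := by rw [smul_neg]; exact exp_mul_exp_neg _
  calc x s = (exp (s • A) * exp (s • -A)) *ᵥ x s := by rw [hinv, one_mulVec]
    _ = exp (s • A) *ᵥ (x 0 + (G s - G 0) *ᵥ c) := by
      rw [← mulVec_mulVec, h, sub_mulVec]; abel_nf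

noncomputable def expNegPrimitive (B Bp : 𝔸) (τ : ℝ) : 𝔸 :=
  τ • (1 - B * Bp) - Bp * exp (τ • -B)

variable {B Bp : 𝔸}

theorem hasDerivAt_expNegPrimitive (hcomm : Commute B Bp) (h : B * Bp * B = B) (t : ℝ) :
    HasDerivAt (expNegPrimitive B Bp) (exp (t • -B)) t := by
  let : NormedAlgebra ℚ 𝔸 := .restrictScalars ℚ ℝ 𝔸
  have hker : (1 - B * Bp) * exp (t • -B) = 1 - B * Bp :=
    mul_exp_eq_self_of_mul_eq_zero <| by
      rw [mul_smul_comm, mul_neg, sub_mul, one_mul, h, sub_self, neg_zero, smul_zero]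
  refine (((hasDerivAt_id t).smul_const (1 - B * Bp)).sub
    ((hasDerivAt_exp_smul_const' (-B) t).const_mul Bp)).congr_deriv ?_
  rw [one_smul, neg_mul, mul_neg, sub_neg_eq_add, ← mul_assoc, ← hcomm.eq, ← hker, ← add_mul,
    sub_add_cancel, one_mul]

theorem exp_mul_expNegPrimitive_sub (hcomm : Commute B Bp) (h : B * Bp * B = B) :
    exp B * (expNegPrimitive B Bp 1 - expNegPrimitive B Bp 0) =
      exp B * Bp + (1 - B * Bp) - Bp := by
  let : NormedAlgebra ℚ 𝔸 := .restrictScalars ℚ ℝ 𝔸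
  have hker : exp B * (1 - B * Bp) = 1 - B * Bp :=
    exp_mul_eq_self_of_mul_eq_zero <| by
      rw [mul_sub, mul_one, hcomm.eq, ← mul_assoc, h, sub_self]
  have hconj : exp B * (Bp * exp (-B)) = Bp := by
    rw [← mul_assoc, hcomm.exp_left.eq, mul_assoc, exp_mul_exp_neg, mul_one]
  simp only [expNegPrimitive, one_smul, zero_smul, exp_zero, mul_one, zero_sub,
    sub_neg_eq_add, mul_add, mul_sub, hker, hconj]
  abel

end RealAlgebra

theorem affine_matrix_ode_solution_general
    (d : ℕ)
    (B : Matrix (Fin d) (Fin d) ℝ) (hB : B.IsSymm) (b : Fin d → ℝ)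
    -- `Bp` is the Moore–Penrose pseudoinverse of `B`:
    (Bp : Matrix (Fin d) (Fin d) ℝ)
    (hBp1 : B * Bp * B = B)
    (hBp3 : (B * Bp).IsSymm) (hBp4 : (Bp * B).IsSymm)
    (m : ℝ → Fin d → ℝ) (Sigma : ℝ → Matrix (Fin d) (Fin d) ℝ)
    (hm_ode : ∀ t, ∀ i, HasDerivAt (fun τ => m τ i) ((B.mulVec (m t) + b) i) t)
    (hSigma_ode : ∀ t, ∀ i j, HasDerivAt (fun τ => Sigma τ i j)
      ((B * Sigma t + Sigma t * Bᵀ) i j) t) :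
    m 1 = (NormedSpace.exp B).mulVec (m 0)
        + (NormedSpace.exp B * Bp + (1 - B * Bp) - Bp).mulVec b ∧
    Sigma 1 = NormedSpace.exp B * Sigma 0 * NormedSpace.exp B := by
  have hcomm : Commute B Bp := hB.commute_of_pseudoinverse hBp1 hBp3 hBp4
  constructor
  · have hm : ∀ t, HasDerivAt m (B *ᵥ m t + b) t := fun t => hasDerivAt_pi.2 (hm_ode t)
    rw [eq_exp_smul_mulVec_of_hasDerivAt hm (hasDerivAt_expNegPrimitive hcomm hBp1) 1, one_smul,
      mulVec_add, mulVec_mulVec]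
    congr 2
    exact exp_mul_expNegPrimitive_sub hcomm hBp1
  · have hS : ∀ t, HasDerivAt Sigma (B * Sigma t + Sigma t * B) t := fun t =>
      hasDerivAt_pi.2 fun i => hasDerivAt_pi.2 fun j => by
        simpa only [hB.eq] using hSigma_ode t i j
    have h := eq_exp_smul_mul_mul_exp_smul_of_hasDerivAt hS 1
    rwa [one_smul] at h

/-- for symmetric constant `B`, the ODE system `ṁ_t = B m_t + b`,
`Σ̇_t = B Σ_t + Σ_t Bᵀ` has the solution
`m_1 = e^B m_0 + (e^B B† + B^⊥ − B†) b`, `Σ_1 = e^B Σ_0 e^B`,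
where `B†` is the Moore–Penrose pseudoinverse and `B^⊥ = I − B B†`. -/
theorem affine_matrix_ode_solution
    (d : ℕ)
    (B : Matrix (Fin d) (Fin d) ℝ) (hB : B.IsSymm) (b : Fin d → ℝ)
    -- `Bp` is the Moore–Penrose pseudoinverse of `B`:
    (Bp : Matrix (Fin d) (Fin d) ℝ)
    (hBp1 : B * Bp * B = B) (hBp2 : Bp * B * Bp = Bp)
    (hBp3 : (B * Bp).IsSymm) (hBp4 : (Bp * B).IsSymm)
    (m : ℝ → Fin d → ℝ) (Sigma : ℝ → Matrix (Fin d) (Fin d) ℝ)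
    (hSigma0 : (Sigma 0).PosDef)
    (hm_ode : ∀ t, ∀ i, HasDerivAt (fun τ => m τ i) ((B.mulVec (m t) + b) i) t)
    (hSigma_ode : ∀ t, ∀ i j, HasDerivAt (fun τ => Sigma τ i j)
      ((B * Sigma t + Sigma t * Bᵀ) i j) t) :
    m 1 = (NormedSpace.exp B).mulVec (m 0)
        + (NormedSpace.exp B * Bp + (1 - B * Bp) - Bp).mulVec b ∧
    Sigma 1 = NormedSpace.exp B * Sigma 0 * NormedSpace.exp B :=
  affine_matrix_ode_solution_general d B hB b Bp hBp1 hBp3 hBp4 m Sigma hm_ode hSigma_ode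
end

section
/- Given Σ_0, Σ_1 symmetric positive definite, the equation Σ_1 = e^B Σ_0 e^B with B symmetric has the unique symmetric solution B = log(Σ_0^{-1/2} (Σ_0^{1/2} Σ_1 Σ_0^{1/2})^{1/2} Σ_0^{-1/2}). -/
/-!
For symmetric `B` the matrix `E = e^B` is positive definite, and with `S = Σ₀^{1/2}` the equation
`E Σ₀ E = Σ₁` says `(S E S)² = S Σ₁ S = T²`. Positive semidefinite square roots are unique, so
`S E S = T`, i.e. `E = S⁻¹ T S⁻¹`. Since `exp` is a bijection from Hermitian onto positive definite
matrices, with inverse the functional-calculus logarithm, `B = log (S⁻¹ T S⁻¹)` is the only solution.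
-/

open Matrix
open scoped MatrixOrder ComplexOrder

namespace Matrix
variable {n 𝕜 : Type*} [Fintype n] [DecidableEq n] [RCLike 𝕜]

lemma IsHermitian.posDef_exp {B : Matrix n n 𝕜} (hB : B.IsHermitian) :
    (NormedSpace.exp B).PosDef := by
  set C := NormedSpace.exp ((2⁻¹ : ℝ) • B)
  have hC : C.IsHermitian := (hB.smul (.all _)).exp
  have hCC : NormedSpace.exp B = Cᴴ * C := by
    rw [hC.eq, ← sq, ← exp_nsmul, ← Nat.cast_smul_eq_nsmul ℝ, smul_smul]
    norm_num
  rw [hCC]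
  exact PosDef.conjTranspose_mul_self C (mulVec_injective_of_isUnit (isUnit_exp _))

lemma PosSemidef.mul_mul_eq_iff {e s t σ : Matrix n n 𝕜} (he : e.PosSemidef) (hs : s.IsHermitian)
    (hsu : IsUnit s) (ht : t.PosSemidef) (hts : t * t = s * σ * s) :
    e * (s * s) * e = σ ↔ e = s⁻¹ * t * s⁻¹ := by
  have := hsu.invertible
  constructor
  · rintro rfl
    have hses_nonneg : 0 ≤ s * e * s := by
      simpa only [hs.eq] using (he.mul_mul_conjTranspose_same s).nonneg
    have hses : s * e * s = t := by
      rw [← CFC.sq_eq_sq_iff _ _ hses_nonneg ht.nonneg, sq, sq, hts]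
      simp only [mul_assoc]
    simp [← hses, ← mul_assoc]
  · rintro rfl
    calc _ = s⁻¹ * (t * t) * s⁻¹ := by simp [← mul_assoc]
      _ = σ := by simp [hts, ← mul_assoc]

open scoped Norms.L2Operator in
lemma exists_unique_isHermitian_exp_eq {M : Matrix n n 𝕜} (hM : M.PosDef) :
    ∃! B : Matrix n n 𝕜, B.IsHermitian ∧ NormedSpace.exp B = M := by
  -- `CFC.log` needs a normed `ℝ`-algebra; the L2 operator norm only provides one over `𝕜`.
  let : NormedAlgebra ℝ (Matrix n n 𝕜) :=
    { norm_smul_le r x := by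
        rw [← algebraMap_smul 𝕜 r x]
        exact (norm_smul_le _ _).trans_eq (by simp) }
  refine ⟨CFC.log M, ⟨IsSelfAdjoint.log, CFC.exp_log M hM.isStrictlyPositive⟩, ?_⟩
  rintro B ⟨hB, rfl⟩
  exact (CFC.log_exp B hB).symm

end Matrix

/-- for `Σ₀, Σ₁` symmetric positive definite, the equation
`Σ₁ = e^B Σ₀ e^B` has a unique symmetric solution, namely
`B = log(Σ₀^{-1/2} (Σ₀^{1/2} Σ₁ Σ₀^{1/2})^{1/2} Σ₀^{-1/2})`; equivalently, the unique
symmetric solution satisfies `e^B = Σ₀^{-1/2} (Σ₀^{1/2} Σ₁ Σ₀^{1/2})^{1/2} Σ₀^{-1/2}`. -/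
theorem exp_conjugation_equation_unique_symmetric_solution
    (d : ℕ)
    (Sig₀ Sig₁ : Matrix (Fin d) (Fin d) ℝ)
    (hSig₀ : Sig₀.PosDef) (hSig₁ : Sig₁.PosDef)
    -- `S0` is the principal square root `Σ₀^{1/2}`:
    (S0 : Matrix (Fin d) (Fin d) ℝ) (hS0 : S0.PosSemidef) (hS0sq : S0 * S0 = Sig₀)
    -- `T` is the principal square root `(Σ₀^{1/2} Σ₁ Σ₀^{1/2})^{1/2}`:
    (T : Matrix (Fin d) (Fin d) ℝ) (hT : T.PosSemidef) (hTsq : T * T = S0 * Sig₁ * S0) :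
    (∃! B : Matrix (Fin d) (Fin d) ℝ,
      B.IsSymm ∧ Sig₁ = NormedSpace.exp B * Sig₀ * NormedSpace.exp B) ∧
    (∀ B : Matrix (Fin d) (Fin d) ℝ, B.IsSymm →
      Sig₁ = NormedSpace.exp B * Sig₀ * NormedSpace.exp B →
      NormedSpace.exp B = S0⁻¹ * T * S0⁻¹) := by
  have hS0u : IsUnit S0 := isUnit_mul_self_iff.mp (hS0sq ▸ hSig₀.isUnit)
  have hTu : IsUnit T := isUnit_mul_self_iff.mp (hTsq ▸ (hS0u.mul hSig₁.isUnit).mul hS0u)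
  have hM : (S0⁻¹ * T * S0⁻¹).PosDef := by
    simpa only [hS0.isHermitian.inv.eq] using
      (hT.posDef_iff_isUnit.mpr hTu).conjTranspose_mul_mul_same
        (mulVec_injective_of_isUnit (isUnit_nonsing_inv_iff.mpr hS0u))
  have hsolve (E : Matrix (Fin d) (Fin d) ℝ) (hE : E.PosSemidef) :
      Sig₁ = E * Sig₀ * E ↔ E = S0⁻¹ * T * S0⁻¹ := by
    rw [eq_comm, ← hS0sq]
    exact hE.mul_mul_eq_iff hS0.isHermitian hS0u hT hTsq
  have hexp (B : Matrix (Fin d) (Fin d) ℝ) (hB : B.IsSymm) :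
      Sig₁ = NormedSpace.exp B * Sig₀ * NormedSpace.exp B ↔
        NormedSpace.exp B = S0⁻¹ * T * S0⁻¹ :=
    hsolve _ (isHermitian_iff_isSymm.mpr hB).posDef_exp.posSemidef
  obtain ⟨L, ⟨hL, hexpL⟩, hL_unique⟩ := exists_unique_isHermitian_exp_eq hM
  have hL_symm : L.IsSymm := isHermitian_iff_isSymm.mp hL
  refine ⟨⟨L, ⟨hL_symm, (hexp L hL_symm).mpr hexpL⟩, ?_⟩, fun B hB => (hexp B hB).mp⟩
  rintro B ⟨hB, hsol⟩
  exact hL_unique B ⟨isHermitian_iff_isSymm.mpr hB, (hexp B hB).mp hsol⟩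
end

section
/- Let ξ(t) = (κ s₀ + λ) e^{-2λβ t} − κ s₀ with β = (1/(2λ)) ln((λ/s₀ + κ)/(λ/s₁ + κ)) for s₀, s₁, λ, κ > 0, s₀ ≠ s₁. Then ξ(1) = λ s₀/s₁ and ∫₀¹ ξ(t)^{-1} dt = (1/(2λβ κ s₀)) ln(s₁/s₀) − 1/(κ s₀). -/
/-!
With `r = -2λβ` one has `exp r = (λ/s₁ + κ)/(λ/s₀ + κ)`, which gives `ξ(0) = λ` and `ξ(1) = λs₀/s₁`,
and `r ≠ 0` because `s₀ ≠ s₁`. Since `ξ(t) = a e^{rt} - c` is monotone and positive at both endpoints, it is positive on `[0,1]`,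
and `t ↦ log(a e^{rt} - c)/(cr) - t/c` is an antiderivative of `1/ξ`.
-/

open Real Set

lemma min_one_exp_le_exp_mul {r t : ℝ} (ht : t ∈ Icc (0 : ℝ) 1) :
    min 1 (exp r) ≤ exp (r * t) := by
  rcases le_total 0 r with hr | hr
  · exact (min_le_left _ _).trans (one_le_exp (mul_nonneg hr ht.1))
  · exact (min_le_right _ _).trans (exp_le_exp.2 (by nlinarith [ht.2]))

lemma mul_exp_mul_sub_pos {a c r t : ℝ} (ha : 0 ≤ a) (h₀ : 0 < a - c)
    (h₁ : 0 < a * exp r - c) (ht : t ∈ Icc (0 : ℝ) 1) :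
    0 < a * exp (r * t) - c := by
  have := mul_le_mul_of_nonneg_left (min_one_exp_le_exp_mul (r := r) ht) ha
  rcases min_cases 1 (exp r) with ⟨hmin, -⟩ | ⟨hmin, -⟩ <;> rw [hmin] at this <;> linarith

lemma hasDerivAt_log_mul_exp_mul_sub {a c r t : ℝ} (hc : c ≠ 0) (hr : r ≠ 0)
    (ht : a * exp (r * t) - c ≠ 0) :
    HasDerivAt (fun t => log (a * exp (r * t) - c) / (c * r) - t / c)
      (a * exp (r * t) - c)⁻¹ t := by
  have hlin : HasDerivAt (fun t : ℝ => r * t) r t := by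
    simpa using (hasDerivAt_id t).const_mul r
  have hlog := ((hlin.exp.const_mul a).sub_const c).log ht
  refine ((hlog.div_const (c * r)).sub ((hasDerivAt_id' t).div_const c)).congr_deriv ?_
  field_simp
  ring

lemma integral_inv_mul_exp_mul_sub {a c r u v : ℝ} (hc : c ≠ 0) (hr : r ≠ 0)
    (hpos : ∀ t ∈ uIcc u v, 0 < a * exp (r * t) - c) :
    ∫ t in u..v, (a * exp (r * t) - c)⁻¹
      = (log (a * exp (r * v) - c) - log (a * exp (r * u) - c)) / (c * r) - (v - u) / c := by
  have hint : IntervalIntegrable (fun t => (a * exp (r * t) - c)⁻¹) MeasureTheory.volume u v :=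
    (ContinuousOn.inv₀ (by fun_prop) fun t ht => (hpos t ht).ne').intervalIntegrable
  rw [intervalIntegral.integral_eq_sub_of_hasDerivAt
    (fun t ht => hasDerivAt_log_mul_exp_mul_sub hc hr (hpos t ht).ne') hint]
  ring

lemma exp_neg_two_mul_log_div {lam x y : ℝ} (hlam : lam ≠ 0) (hx : 0 < x) (hy : 0 < y) :
    exp (-2 * lam * (1 / (2 * lam) * log (x / y))) = y / x := by
  have : -2 * lam * (1 / (2 * lam) * log (x / y)) = -log (x / y) := by
    field_simp
  rw [this, ← log_inv, inv_div, exp_log (div_pos hy hx)]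

/-- with `ξ(t) = (κs₀+λ)e^{−2λβt} − κs₀` and
`β = (1/(2λ)) ln((λ/s₀+κ)/(λ/s₁+κ))`, one has `ξ(1) = λs₀/s₁` and
`∫₀¹ ξ(t)⁻¹ dt = (1/(2λβκs₀)) ln(s₁/s₀) − 1/(κs₀)`. -/
theorem kw_xi_integral
    (lam κ s₀ s₁ : ℝ) (hlam : 0 < lam) (hκ : 0 < κ)
    (hs₀ : 0 < s₀) (hs₁ : 0 < s₁) (hne : s₀ ≠ s₁)
    (β : ℝ) (hβ : β = (1 / (2 * lam)) * Real.log ((lam / s₀ + κ) / (lam / s₁ + κ)))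
    (ξ : ℝ → ℝ)
    (hξ : ∀ t, ξ t = (κ * s₀ + lam) * Real.exp (-2 * lam * β * t) - κ * s₀) :
    ξ 1 = lam * s₀ / s₁ ∧
    (∫ t in (0 : ℝ)..1, (ξ t)⁻¹)
      = (1 / (2 * lam * β * (κ * s₀))) * Real.log (s₁ / s₀) - 1 / (κ * s₀) := by
  have hexp : exp (-2 * lam * β) = (lam / s₁ + κ) / (lam / s₀ + κ) := by
    rw [hβ]
    exact exp_neg_two_mul_log_div hlam.ne' (by positivity) (by positivity)
  set r := -2 * lam * β with hr_def
  have hξ₀ : ξ 0 = lam := by simp [hξ]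
  have hξ₁ : ξ 1 = lam * s₀ / s₁ := by
    rw [hξ, mul_one, hexp]
    field_simp
    ring
  have hr : r ≠ 0 := by
    intro hr
    rw [hr, exp_zero, eq_comm, div_eq_one_iff_eq (by positivity), add_left_inj,
      div_eq_div_iff hs₁.ne' hs₀.ne', mul_right_inj' hlam.ne'] at hexp
    exact hne hexp
  have hβ₀ : β ≠ 0 := by rintro rfl; simp [r] at hr
  have hpos : ∀ t ∈ uIcc (0 : ℝ) 1, 0 < (κ * s₀ + lam) * exp (r * t) - κ * s₀ := by
    rw [uIcc_of_le zero_le_one]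
    refine fun t ht => mul_exp_mul_sub_pos (by positivity) (by linarith) ?_ ht
    simpa [hξ, ← hξ₁] using div_pos (mul_pos hlam hs₀) hs₁
  refine ⟨hξ₁, ?_⟩
  simp_rw [hξ]
  rw [integral_inv_mul_exp_mul_sub (by positivity) hr hpos, ← hξ, ← hξ, hξ₀, hξ₁,
    log_div (by positivity) hs₁.ne', log_mul hlam.ne' hs₀.ne', log_div hs₁.ne' hs₀.ne', hr_def]
  field_simp
  ring
end
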